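/- arXiv:2305.18579 — 4 statements merged into one kernel-verified Lean document; each statement's English description precedes it below -/
import Mathlib

section
/- Let R be a commutative Noetherian ring, I and J ideals of R, and a ∈ I a regular element (non-zero-divisor). Then Hom_R(I, J) is isomorphic as an R-module to the ideal quotient (aJ :_R I) (via multiplication by a); in particular Hom_R(I, R) ≅ ((a) :_R I). -/
open Submodule

lemma hom_ideal_helper {R : Type*} [CommRing R]
    (I : Ideal R) (J : Submodule R R) (a : R) (haI : a ∈ I)
    (ha : a ∈ nonZeroDivisors R) :
    ∃ e : (↥I →ₗ[R] ↥J) ≃ₗ[R] ↥(Submodule.colon (Ideal.span {a} * J) I),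
      ∀ f : ↥I →ₗ[R] ↥J, (e f : R) = (f ⟨a, haI⟩ : R) := by
  have cancel : ∀ x y : R, a * x = a * y → x = y := fun x y h =>
    (mul_cancel_left_mem_nonZeroDivisors ha).mp h
  have swap : ∀ (f : ↥I →ₗ[R] ↥J) (x : R) (hx : x ∈ I),
      (f ⟨a, haI⟩ : R) * x = a * (f ⟨x, hx⟩ : R) := by
    intro f x hx
    have h1 : (x : R) • (⟨a, haI⟩ : ↥I) = a • (⟨x, hx⟩ : ↥I) := by
      ext; simp [mul_comm]
    have h2 : (x : R) • f ⟨a, haI⟩ = a • f ⟨x, hx⟩ := by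
      rw [← map_smul, ← map_smul, h1]
    have h3 := congrArg (Subtype.val) h2
    simpa [smul_eq_mul, mul_comm] using h3
  have fwd : ∀ f : ↥I →ₗ[R] ↥J, (f ⟨a, haI⟩ : R) ∈ Submodule.colon (Ideal.span {a} * J) I := by
    intro f
    rw [Submodule.mem_colon]
    intro x hx
    rw [smul_eq_mul, swap f x hx]
    exact Ideal.mem_span_singleton_mul.mpr ⟨_, (f ⟨x, hx⟩).2, rfl⟩
  have key : ∀ (r : ↥(Submodule.colon (Ideal.span {a} * J) I)) (x : ↥I),
      ∃ j : ↥J, a * (j : R) = (r : R) * (x : R) := by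
    intro r x
    have h := Submodule.mem_colon.mp r.2 x x.2
    rw [smul_eq_mul] at h
    obtain ⟨j, hj, hje⟩ := Ideal.mem_span_singleton_mul.mp h
    exact ⟨⟨j, hj⟩, hje⟩
  let g : ↥(Submodule.colon (Ideal.span {a} * J) I) → ↥I → ↥J :=
    fun r x => (key r x).choose
  have hg : ∀ r x, a * ((g r x : ↥J) : R) = (r : R) * (x : R) := fun r x => (key r x).choose_spec
  have canJ : ∀ j k : ↥J, a * (j : R) = a * (k : R) → j = k := fun j k h =>
    Subtype.ext (cancel _ _ h)
  let G : ↥(Submodule.colon (Ideal.span {a} * J) I) →ₗ[R] (↥I →ₗ[R] ↥J) :=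
    { toFun := fun r =>
        { toFun := g r
          map_add' := by
            intro x y
            apply canJ
            push_cast
            rw [mul_add a]
            simp only [hg]
            push_cast
            ring
          map_smul' := by
            intro c x
            apply canJ
            rw [hg]
            simp only [RingHom.id_apply, SetLike.val_smul, smul_eq_mul, Submodule.coe_smul]
            rw [mul_left_comm a c, hg]
            ring }
      map_add' := by
        intro r s
        ext x
        show ((g (r + s) x : ↥J) : R) = ((g r x + g s x : ↥J) : R)
        apply cancel
        push_cast
        rw [mul_add a]
        simp only [hg]
        push_cast
        ring
      map_smul' := by
        intro c r
        ext x
        show ((g (c • r) x : ↥J) : R) = ((c • g r x : ↥J) : R)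
        apply cancel
        rw [hg]
        simp only [SetLike.val_smul, smul_eq_mul, Submodule.coe_smul]
        rw [mul_left_comm a c, hg]
        ring }
  let F : (↥I →ₗ[R] ↥J) →ₗ[R] ↥(Submodule.colon (Ideal.span {a} * J) I) :=
    { toFun := fun f => ⟨(f ⟨a, haI⟩ : R), fwd f⟩
      map_add' := by intro f h; rfl
      map_smul' := by intro c f; rfl }
  have hGF : ∀ f, G (F f) = f := by
    intro f
    refine LinearMap.ext fun x => canJ _ _ ?_
    show a * ((g (F f) x : ↥J) : R) = a * ((f x : ↥J) : R)
    rw [hg]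
    show (f ⟨a, haI⟩ : R) * (x : R) = a * (f x : R)
    exact swap f x x.2
  have hFG : ∀ r, F (G r) = r := by
    intro r
    apply Subtype.ext
    show ((g r ⟨a, haI⟩ : ↥J) : R) = (r : R)
    apply cancel
    rw [hg, mul_comm]
  refine ⟨LinearEquiv.ofLinear F G ?_ ?_, fun f => rfl⟩
  · ext r; simp [hFG]
  · ext f x; simp [hGF]

/-- Let `R` be a commutative Noetherian ring, `I` and `J` ideals of `R`,
and `a ∈ I` a non-zero-divisor.  Then `Hom_R(I, J)` is isomorphic as an `R`-module to the
ideal quotient `(aJ :_R I)`, the isomorphism identifying `f` with the element `f(a)`;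
in particular `Hom_R(I, R) ≅ ((a) :_R I)`. -/
theorem hom_ideal_iso_colon {R : Type*} [CommRing R] [IsNoetherianRing R]
    (I J : Ideal R) (a : R) (haI : a ∈ I) (ha : a ∈ nonZeroDivisors R) :
    (∃ e : (↥I →ₗ[R] ↥J) ≃ₗ[R] ↥(Submodule.colon (Ideal.span {a} * J) I),
        ∀ f : ↥I →ₗ[R] ↥J, (e f : R) = (f ⟨a, haI⟩ : R)) ∧
    (∃ e : (↥I →ₗ[R] R) ≃ₗ[R] ↥(Submodule.colon (Ideal.span {a}) I),
        ∀ f : ↥I →ₗ[R] R, (e f : R) = f ⟨a, haI⟩) := by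
  constructor
  · exact hom_ideal_helper I J a haI ha
  · obtain ⟨e, he⟩ := hom_ideal_helper I (⊤ : Submodule R R) a haI ha
    have hEq : Ideal.span {a} * (⊤ : Ideal R) = Ideal.span {a} := Ideal.mul_top _
    refine ⟨(LinearEquiv.congrRight ((Submodule.topEquiv : (⊤ : Submodule R R) ≃ₗ[R] R).symm)).trans
        (e.trans (LinearEquiv.ofEq _ _ (by rw [hEq]))), fun f => ?_⟩
    simp only [LinearEquiv.trans_apply, LinearEquiv.coe_ofEq_apply]
    rw [he]
    rfl
end

section
/- Let R be a commutative Noetherian ring, I an ideal containing a non-zero-divisor a. Then the bidual I** = Hom_R(Hom_R(I,R), R) is isomorphic to the ideal ((a) :_R ((a) :_R I)), and under this identification the canonical map I → I** corresponds to the inclusion I ⊆ ((a) :_R ((a) :_R I)). -/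
namespace BidualAux

variable {R : Type*} [CommRing R]

noncomputable def odiv (a : R) {x : R} (h : x ∈ Ideal.span {a}) : R :=
  (Ideal.mem_span_singleton'.mp h).choose

lemma odiv_spec (a : R) {x : R} (h : x ∈ Ideal.span {a}) : odiv a h * a = x :=
  (Ideal.mem_span_singleton'.mp h).choose_spec

lemma cancel {a : R} (ha : a ∈ nonZeroDivisors R) {u v : R} (h : u * a = v * a) : u = v :=
  (mul_cancel_right_mem_nonZeroDivisors ha).mp h

lemma key (a : R) {I : Ideal R} (haI : a ∈ I) (f : Module.Dual R ↥I) (x : ↥I) :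
    a * f x = (x : R) * f ⟨a, haI⟩ := by
  have h1 : a • x = (x : R) • (⟨a, haI⟩ : ↥I) := by
    ext; simp [mul_comm]
  calc a * f x = f (a • x) := by rw [map_smul, smul_eq_mul]
    _ = f ((x : R) • (⟨a, haI⟩ : ↥I)) := by rw [h1]
    _ = (x : R) * f ⟨a, haI⟩ := by rw [map_smul, smul_eq_mul]

lemma memJ {a' : R} {I : Ideal R} (y : ↥((Ideal.span {a'}).colon I)) (x : ↥I) :
    (y : R) * (x : R) ∈ Ideal.span {a'} := by
  have := Submodule.mem_colon.mp y.2 (x : R) x.2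
  simpa [smul_eq_mul] using this

noncomputable def invAux (a : R) (ha : a ∈ nonZeroDivisors R) {I : Ideal R}
    (y : ↥((Ideal.span {a}).colon I)) : Module.Dual R ↥I where
  toFun x := odiv a (memJ y x)
  map_add' x x' := by
    apply cancel ha
    rw [add_mul, odiv_spec a (memJ y (x + x')), odiv_spec a (memJ y x),
      odiv_spec a (memJ y x'), Submodule.coe_add, mul_add]
  map_smul' r x := by
    apply cancel ha
    rw [smul_eq_mul, RingHom.id_apply, mul_assoc, odiv_spec a (memJ y (r • x)),
      odiv_spec a (memJ y x), Submodule.coe_smul, smul_eq_mul]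
    ring

lemma invAux_spec (a : R) (ha : a ∈ nonZeroDivisors R) {I : Ideal R}
    (y : ↥((Ideal.span {a}).colon I)) (x : ↥I) :
    invAux a ha y x * a = (y : R) * (x : R) :=
  odiv_spec a (memJ y x)

noncomputable def dualEquiv (a : R) (ha : a ∈ nonZeroDivisors R) (I : Ideal R) (haI : a ∈ I) :
    Module.Dual R ↥I ≃ₗ[R] ↥((Ideal.span {a}).colon I) where
  toFun f := ⟨f ⟨a, haI⟩, Submodule.mem_colon.mpr fun p hp =>
    Ideal.mem_span_singleton'.mpr ⟨f ⟨p, hp⟩, by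
      have h := key a haI f ⟨p, hp⟩
      rw [smul_eq_mul, mul_comm (f ⟨p, hp⟩) a, h, mul_comm]⟩⟩
  map_add' f g := by ext; simp
  map_smul' r f := by ext; simp
  invFun y := invAux a ha y
  left_inv f := by
    apply LinearMap.ext
    intro x
    apply cancel ha
    show invAux a ha _ x * a = f x * a
    rw [invAux_spec]
    show (f ⟨a, haI⟩) * (x : R) = f x * a
    rw [mul_comm (f x) a, key a haI f x, mul_comm]
  right_inv y := by
    apply Subtype.ext
    apply cancel ha
    show invAux a ha y ⟨a, haI⟩ * a = (y : R) * a
    rw [invAux_spec]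

@[simp] lemma dualEquiv_apply (a : R) (ha : a ∈ nonZeroDivisors R) (I : Ideal R) (haI : a ∈ I)
    (f : Module.Dual R ↥I) : (dualEquiv a ha I haI f : R) = f ⟨a, haI⟩ := rfl

end BidualAux

open BidualAux in
/-- Let `R` be a commutative Noetherian ring and `I` an ideal containing a
non-zero-divisor `a`.  Then the bidual `I** = Hom_R(Hom_R(I,R),R)` is isomorphic to the ideal
`((a) :_R ((a) :_R I))`, and under this identification the canonical evaluation map
`I → I**` corresponds to the inclusion `I ⊆ ((a) :_R ((a) :_R I))`. -/
theorem bidual_ideal_iso_double_colon {R : Type*} [CommRing R] [IsNoetherianRing R]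
    (I : Ideal R) (a : R) (haI : a ∈ I) (ha : a ∈ nonZeroDivisors R) :
    ∃ e : Module.Dual R (Module.Dual R ↥I) ≃ₗ[R]
        ↥(Submodule.colon (Ideal.span {a}) (Submodule.colon (Ideal.span {a}) I)),
      ∀ x : ↥I, (e (Module.Dual.eval R ↥I x) : R) = (x : R) := by
  set J := (Ideal.span {a}).colon I with hJ
  have haJ : a ∈ J := Submodule.mem_colon.mpr fun p hp =>
    Ideal.mem_span_singleton'.mpr ⟨p, by rw [smul_eq_mul, mul_comm]⟩
  let D := dualEquiv a ha I haI
  let E := dualEquiv a ha J haJ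
  refine ⟨(D.symm.dualMap).trans E, fun x => ?_⟩
  simp only [LinearEquiv.trans_apply, LinearEquiv.dualMap_apply, dualEquiv_apply,
    LinearMap.coe_comp, Function.comp_apply, LinearEquiv.coe_coe]
  show ((Module.Dual.eval R ↥I x) (D.symm ⟨a, haJ⟩)) = (x : R)
  set f := D.symm ⟨a, haJ⟩ with hf
  have hfa : f ⟨a, haI⟩ = a := by
    have h1 : D f = ⟨a, haJ⟩ := by rw [hf, LinearEquiv.apply_symm_apply]
    exact Subtype.ext_iff.mp h1
  show f x = (x : R)
  apply cancel ha
  rw [mul_comm (f x) a, key a haI f x, hfa, mul_comm]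
end

section
/- Let R be a one-dimensional Cohen-Macaulay local ring and I an ideal containing a non-zero-divisor. If I is closed (i.e., Hom_R(I,I) = R, meaning every endomorphism of I is multiplication by an element of R) and I is reflexive (the natural map I → I** is an isomorphism), then I is a principal ideal. -/
/-!
If some `f ∈ I*` takes a unit value at `a ∈ I`, then `I = (a)`. Otherwise every `f ∈ I*` maps `I`
into the maximal ideal `m`. Pick a non-zero-divisor `x ∈ m`. As `dim R = 1`, every prime containing
`x` is maximal, so `m` is an associated prime of `R ⧸ (x)`: there is `y ∉ (x)` with `m y ⊆ (x)`.
Then multiplication by `y / x` is an endomorphism of `I*`. Through `I ≅ I**` its transpose is an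
endomorphism of `I`, hence multiplication by some `r ∈ R` as `I` is closed; so `y f = x r f` for
all `f ∈ I*`, and evaluating the inclusion `I → R` at a non-zero-divisor of `I` gives `y = r x`.
-/

open IsLocalRing Module nonZeroDivisors

section

variable {R : Type*} [CommRing R]

theorem Ideal.IsPrime.isMaximal_of_mem_nonZeroDivisors [Ring.KrullDimLE 1 R] {p : Ideal R}
    (hp : p.IsPrime) {x : R} (hxp : x ∈ p) (hx : x ∈ R⁰) : p.IsMaximal :=
  (Ring.krullDimLE_one_iff.mp ‹_› p hp).resolve_left fun hmin ↦
    notMem_nonZeroDivisors_of_mem_mem_minimalPrimes hxp hmin hx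

theorem IsLocalRing.exists_notMem_span_singleton_forall_mul_mem [IsNoetherianRing R]
    [IsLocalRing R] [Ring.KrullDimLE 1 R] {x : R} (hxm : x ∈ maximalIdeal R) (hx : x ∈ R⁰) :
    ∃ y ∉ Ideal.span {x}, ∀ c ∈ maximalIdeal R, c * y ∈ Ideal.span {x} := by
  have : Nontrivial (R ⧸ Ideal.span {x}) := Ideal.Quotient.nontrivial_iff.mpr fun h ↦
    (maximalIdeal.isMaximal R).ne_top
      (top_le_iff.mp (h ▸ (Ideal.span_singleton_le_iff_mem _).mpr hxm))
  obtain ⟨p, hp⟩ := associatedPrimes.nonempty R (R ⧸ Ideal.span {x})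
  have hxp : x ∈ p := by
    refine hp.annihilator_le ?_
    rw [Submodule.annihilator_top, Ideal.annihilator_quotient]
    exact Ideal.mem_span_singleton_self x
  have hpm : p = maximalIdeal R :=
    eq_maximalIdeal (hp.isPrime.isMaximal_of_mem_nonZeroDivisors hxp hx)
  obtain ⟨-, z, hz⟩ := (isAssociatedPrime_iff).mp hp
  obtain ⟨y, rfl⟩ := Ideal.Quotient.mk_surjective z
  have hcolon : ∀ c, c ∈ maximalIdeal R ↔ c * y ∈ Ideal.span {x} := fun c ↦ by
    rw [← hpm, hz, Submodule.mem_colon_singleton, Submodule.mem_bot, Algebra.smul_def,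
      Ideal.Quotient.algebraMap_eq, ← map_mul, Ideal.Quotient.eq_zero_iff_mem]
  refine ⟨y, fun hy ↦ ?_, fun c hc ↦ (hcolon c).mp hc⟩
  exact (maximalIdeal.isMaximal R).ne_top ((Ideal.eq_top_iff_one _).mpr
    ((hcolon 1).mpr (by rwa [one_mul])))

theorem Ideal.eq_span_singleton_of_isUnit_dual_apply {I : Ideal R} (f : Dual R I) (a : I)
    (h : IsUnit (f a)) : I = Ideal.span {(a : R)} := by
  refine le_antisymm (fun b hb ↦ ?_) ((Ideal.span_singleton_le_iff_mem I).mpr a.2)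
  have hsymm : f a * b = f ⟨b, hb⟩ * a := by
    have := congrArg f (show (a : R) • (⟨b, hb⟩ : I) = b • a from Subtype.ext (mul_comm _ _))
    rw [map_smul, map_smul, smul_eq_mul, smul_eq_mul] at this
    linear_combination -this
  obtain ⟨u, hu⟩ := h
  refine Ideal.mem_span_singleton'.mpr ⟨↑u⁻¹ * f ⟨b, hb⟩, ?_⟩
  rw [mul_assoc, ← hsymm, ← hu, Units.inv_mul_cancel_left]

theorem Module.Dual.exists_eq_smul_of_bijective_eval {M : Type*} [AddCommGroup M] [Module R M]
    (hrefl : Function.Bijective (Dual.eval R M))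
    (hclosed : ∀ φ : M →ₗ[R] M, ∃ r : R, ∀ a, φ a = r • a)
    (Φ : Dual R M →ₗ[R] Dual R M) : ∃ r : R, ∀ f, Φ f = r • f := by
  let e := LinearEquiv.ofBijective (Dual.eval R M) hrefl
  obtain ⟨r, hr⟩ := hclosed (e.symm.toLinearMap ∘ₗ Φ.dualMap ∘ₗ e.toLinearMap)
  refine ⟨r, fun f ↦ LinearMap.ext fun a ↦ ?_⟩
  have h : Φ.dualMap (e a) = e (r • a) := by
    rw [← hr]
    simp
  simpa [e] using congrArg (· f) h

theorem Ideal.mem_span_singleton_of_forall_mul_dual_apply_mem {I : Ideal R}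
    (hreg : ∃ a ∈ I, a ∈ R⁰) (hscalar : ∀ Φ : Dual R I →ₗ[R] Dual R I, ∃ r : R, ∀ f, Φ f = r • f)
    {x y : R} (hx : x ∈ R⁰) (hxy : ∀ (f : Dual R I) a, y * f a ∈ Ideal.span {x}) :
    y ∈ Ideal.span {x} := by
  obtain ⟨a, haI, ha⟩ := hreg
  have hrange : ∀ (f : Dual R I) a, (y • LinearMap.id : Dual R I →ₗ[R] Dual R I) f a ∈
      LinearMap.range (LinearMap.mulLeft R x) := fun f a ↦ by
    obtain ⟨c, hc⟩ := Ideal.mem_span_singleton'.mp (hxy f a)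
    exact ⟨c, by simp [← hc, mul_comm]⟩
  have hinj : Function.Injective (LinearMap.mulLeft R x) := fun _ _ h ↦
    (mul_cancel_left_mem_nonZeroDivisors hx).mp h
  -- `codRestrict₂` divides `y • f` by `x`: this is the endomorphism `f ↦ (y / x) f` of `I*`
  obtain ⟨r, hr⟩ := hscalar (LinearMap.codRestrict₂ _ _ hinj hrange)
  have hxra : x * (r * a) = y * a := by
    simpa [hr] using LinearMap.codRestrict₂_apply _ _ hinj hrange I.subtype ⟨a, haI⟩
  refine Ideal.mem_span_singleton'.mpr ⟨r, ?_⟩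
  rwa [← mul_assoc, mul_cancel_right_mem_nonZeroDivisors ha, mul_comm] at hxra

end

/-- Let `R` be a one-dimensional Cohen-Macaulay local ring (Noetherian local
of Krull dimension 1 whose maximal ideal contains a non-zero-divisor, i.e. depth 1) and `I` an
ideal containing a non-zero-divisor.  If `I` is closed (every `R`-linear endomorphism of `I` is
multiplication by an element of `R`) and reflexive (the natural evaluation map `I → I**` is
bijective), then `I` is a principal ideal. -/
theorem closed_reflexive_ideal_isPrincipal {R : Type*} [CommRing R] [IsNoetherianRing R]
    [IsLocalRing R] (hdim : ringKrullDim R = 1)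
    (hdepth : ∃ r ∈ IsLocalRing.maximalIdeal R, r ∈ nonZeroDivisors R)
    (I : Ideal R) (hreg : ∃ a ∈ I, a ∈ nonZeroDivisors R)
    (hclosed : ∀ φ : ↥I →ₗ[R] ↥I, ∃ r : R, ∀ x : ↥I, (φ x : R) = r * (x : R))
    (hrefl : Function.Bijective (Module.Dual.eval R ↥I)) :
    I.IsPrincipal := by
  have : Ring.KrullDimLE 1 R := Ring.krullDimLE_iff.mpr hdim.le
  obtain ⟨x, hxm, hx⟩ := hdepth
  by_cases hunit : ∃ (f : Dual R I) (a : I), IsUnit (f a)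
  · obtain ⟨f, a, hfa⟩ := hunit
    exact ⟨a, Ideal.eq_span_singleton_of_isUnit_dual_apply f a hfa⟩
  have hscalar := Dual.exists_eq_smul_of_bijective_eval hrefl fun φ ↦
    (hclosed φ).imp fun r hr a ↦ Subtype.ext (hr a)
  obtain ⟨y, hy, hym⟩ := IsLocalRing.exists_notMem_span_singleton_forall_mul_mem hxm hx
  refine absurd (Ideal.mem_span_singleton_of_forall_mul_dual_apply_mem hreg hscalar hx
    fun f a ↦ ?_) hy
  rw [mul_comm]
  exact hym _ ((mem_maximalIdeal _).mpr fun h ↦ hunit ⟨f, a, h⟩)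
end

section
/- Let (R,m) be a one-dimensional Cohen-Macaulay local ring with canonical ideal C and minimal reduction (a) of C. Then the canonical degree cdeg(R) = λ(C/(a)) is nonnegative, and cdeg(R) = 0 if and only if C is a principal ideal (equivalently R is Gorenstein). -/
/-! The length of `C/(a)` is zero exactly when `C ⊆ (a)`, i.e. `C = (a)`. If `C = (c)` is
principal, then `c` divides a non-zero-divisor and so is one; cancelling `c^n` in the reduction
equation `(c)^(n+1) = (a)(c)^n` gives `c ∈ (a)`, hence `C = (a)`. -/

/-- The length of an `R`-module, realized as the Krull dimension of its lattice of
submodules. -/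
noncomputable def moduleLength (R M : Type*) [CommRing R] [AddCommGroup M] [Module R M] :
    WithBot ℕ∞ :=
  Order.krullDim (Submodule R M)

/-- An ideal `C` of a one-dimensional Cohen-Macaulay local ring is a *canonical ideal* iff it
is proper, contains a non-zero-divisor, and every ideal containing a non-zero-divisor is
`C`-reflexive: `C : (C : I) = I` (Herzog–Kunz). -/
def IsCanonicalIdeal (R : Type*) [CommRing R] (C : Ideal R) : Prop :=
  C ≠ ⊤ ∧ (∃ a ∈ C, a ∈ nonZeroDivisors R) ∧
    ∀ I : Ideal R, (∃ b ∈ I, b ∈ nonZeroDivisors R) →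
      Submodule.colon C (Submodule.colon C I) = I

lemma moduleLength_eq_zero_iff {R M : Type*} [CommRing R] [AddCommGroup M] [Module R M] :
    moduleLength R M = 0 ↔ Subsingleton M := by
  rw [moduleLength, Order.krullDim_eq_zero_iff_of_orderBot, Submodule.subsingleton_iff]

namespace Ideal

variable {R : Type*} [CommRing R]

lemma span_singleton_le_of_pow_succ_eq_mul {a c : R} (hc : c ∈ nonZeroDivisors R) {n : ℕ}
    (hred : span {c} ^ (n + 1) = span {a} * span {c} ^ n) :
    span {c} ≤ span {a} := by
  rw [span_singleton_pow, span_singleton_pow, span_singleton_mul_span_singleton] at hred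
  obtain ⟨u, hu⟩ : a * c ^ n ∣ c ^ (n + 1) :=
    mem_span_singleton.mp (hred ▸ mem_span_singleton_self _)
  have hcu : (c - a * u) * c ^ n = 0 := by linear_combination hu
  have hca : c = a * u := sub_eq_zero.mp <|
    (mul_right_mem_nonZeroDivisors_eq_zero_iff (pow_mem hc n)).mp hcu
  exact (span_singleton_le_iff_mem _).mpr (mem_span_singleton.mpr ⟨u, hca⟩)

lemma eq_span_singleton_of_isPrincipal_of_reduction {C : Ideal R}
    (hnzd : ∃ b ∈ C, b ∈ nonZeroDivisors R) (hp : C.IsPrincipal) {a : R} (haC : a ∈ C)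
    (hred : ∃ n, C ^ (n + 1) = span {a} * C ^ n) :
    C = span {a} := by
  obtain ⟨c, rfl⟩ := hp
  obtain ⟨b, hbC, hb⟩ := hnzd
  obtain ⟨d, rfl⟩ := mem_span_singleton.mp hbC
  obtain ⟨n, hn⟩ := hred
  have hc : c ∈ nonZeroDivisors R := (mul_mem_nonZeroDivisors.mp hb).1
  exact le_antisymm (span_singleton_le_of_pow_succ_eq_mul hc hn)
    ((span_singleton_le_iff_mem _).mpr haC)

end Ideal

theorem cdeg_nonneg_and_eq_zero_iff_principal_general {R : Type*} [CommRing R]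
    (C : Ideal R) (hC : IsCanonicalIdeal R C)
    (a : R) (haC : a ∈ C) (hred : ∃ n, C ^ (n + 1) = Ideal.span {a} * C ^ n) :
    0 ≤ moduleLength R (↥C ⧸ Submodule.comap C.subtype (Ideal.span {a})) ∧
      (moduleLength R (↥C ⧸ Submodule.comap C.subtype (Ideal.span {a})) = 0 ↔
        C.IsPrincipal) := by
  refine ⟨Order.krullDim_nonneg, ?_⟩
  rw [moduleLength_eq_zero_iff, Submodule.Quotient.subsingleton_iff,
    Submodule.comap_subtype_eq_top]
  constructor
  · intro hle
    exact ⟨a, le_antisymm hle ((Ideal.span_singleton_le_iff_mem _).mpr haC)⟩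
  · intro hp
    exact (Ideal.eq_span_singleton_of_isPrincipal_of_reduction hC.2.1 hp haC hred).le

/-- Let `(R, 𝔪)` be a one-dimensional Cohen-Macaulay local ring with
canonical ideal `C` and minimal reduction `(a)` of `C`.  Then the canonical degree
`cdeg(R) = λ(C/(a))` is nonnegative, and `cdeg(R) = 0` if and only if `C` is a principal
ideal (equivalently, `R` is Gorenstein). -/
theorem cdeg_nonneg_and_eq_zero_iff_principal {R : Type*} [CommRing R] [IsNoetherianRing R]
    [IsLocalRing R] (hdim : ringKrullDim R = 1)
    (hdepth : ∃ r ∈ IsLocalRing.maximalIdeal R, r ∈ nonZeroDivisors R)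
    (C : Ideal R) (hC : IsCanonicalIdeal R C)
    (a : R) (haC : a ∈ C) (hred : ∃ n, C ^ (n + 1) = Ideal.span {a} * C ^ n) :
    0 ≤ moduleLength R (↥C ⧸ Submodule.comap C.subtype (Ideal.span {a})) ∧
      (moduleLength R (↥C ⧸ Submodule.comap C.subtype (Ideal.span {a})) = 0 ↔
        C.IsPrincipal) :=
  cdeg_nonneg_and_eq_zero_iff_principal_general C hC a haC hred
end
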